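/- arXiv:1205.3121 — 7 statements merged into one kernel-verified Lean document; each statement's English description precedes it below -/
import Mathlib

section
/- A group homomorphism h : G₁ → G₂ is surjective if and only if for every transitive right G₂-set S, the G₁-set obtained by pulling back the action along h is transitive. -/
/-- A homomorphism `h : G₁ →* G₂` is surjective iff every transitive `G₂`-set
pulls back along `h` to a transitive `G₁`-set. -/
theorem stmt_2 {G₁ G₂ : Type u} [Group G₁] [Group G₂] (h : G₁ →* G₂) :
    Function.Surjective h ↔
      ∀ (S : Type u) (m : MulAction G₂ S), Nonempty S →
        (∀ s t : S, ∃ g : G₂, m.smul g s = t) →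
        (∀ s t : S, ∃ g₁ : G₁, m.smul (h g₁) s = t) := by
  constructor
  · intro hs S m _ htrans s t
    obtain ⟨g, hg⟩ := htrans s t
    obtain ⟨g₁, rfl⟩ := hs g
    exact ⟨g₁, hg⟩
  · intro H g
    obtain ⟨g₁, hg₁⟩ := H (G₂ ⧸ h.range) inferInstance ⟨(1 : G₂)⟩
      (fun s t => by
        induction s using QuotientGroup.induction_on
        induction t using QuotientGroup.induction_on
        rename_i a b
        exact ⟨b * a⁻¹, by
          show ((b * a⁻¹ * a : G₂) : G₂ ⧸ h.range) = b
          simp⟩) ((1 : G₂) : G₂ ⧸ h.range) (g : G₂ ⧸ h.range)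
    have : ((h g₁ * 1 : G₂) : G₂ ⧸ h.range) = (g : G₂ ⧸ h.range) := hg₁
    rw [mul_one, QuotientGroup.eq] at this
    obtain ⟨x, hx⟩ := this
    exact ⟨g₁ * x, by rw [map_mul, hx, mul_inv_cancel_left]⟩
end

section
/- Let h : G₁ → G₂ be a group homomorphism with image I. If the normal closure of I in G₂ is a proper subgroup K of G₂, then the pullback along h of the (nontrivial) G₂-set K\G₂ is a trivial G₁-set (a disjoint union of one-point G₁-sets). Consequently h* does not have nullity zero. -/
/-- If the normal closure `K` of the image of `h : G₁ →* G₂` is a proper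
subgroup of `G₂`, then the pullback along `h` of the nontrivial `G₂`-set
`G₂ ⧸ K` is a trivial `G₁`-set; hence `h*` does not have nullity zero. -/
theorem stmt_7 {G₁ G₂ : Type*} [Group G₁] [Group G₂] (h : G₁ →* G₂)
    (hK : Subgroup.normalClosure (h.range : Set G₂) ≠ ⊤) :
    (∀ (g₁ : G₁) (x : G₂ ⧸ Subgroup.normalClosure (h.range : Set G₂)),
        h g₁ • x = x) ∧
      ∃ (g₂ : G₂) (x : G₂ ⧸ Subgroup.normalClosure (h.range : Set G₂)),
        g₂ • x ≠ x := by
  set K := Subgroup.normalClosure (h.range : Set G₂) with hKdef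
  constructor
  · intro g₁ x
    induction x using QuotientGroup.induction_on with
    | H y =>
      have hmem : h g₁ ∈ K :=
        Subgroup.subset_normalClosure ⟨g₁, rfl⟩
      show QuotientGroup.mk (h g₁ * y) = QuotientGroup.mk y
      rw [QuotientGroup.eq]
      have := Subgroup.Normal.conj_mem Subgroup.normalClosure_normal _ (K.inv_mem hmem) y⁻¹
      simpa [hKdef] using this
  · obtain ⟨g₂, hg₂⟩ : ∃ g₂, g₂ ∉ K := by
      by_contra hc
      push_neg at hc
      exact hK ((Subgroup.eq_top_iff' K).mpr hc)
    refine ⟨g₂, (1 : G₂ ⧸ K), fun hx => hg₂ ?_⟩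
    have := QuotientGroup.eq.mp (show QuotientGroup.mk (g₂ * 1) = QuotientGroup.mk (1:G₂) from hx)
    simpa using this
end

section
/- Let h : G₁ → G₂ be a group homomorphism that is not surjective, with image I of finite index in G₂. Then h* is not essentially injective: there exist two non-isomorphic G₂-sets whose pullbacks along h are isomorphic G₁-sets. (Concretely, with c the number of (I,I)-double cosets whose pullback orbit is a fixed point, one may use countably infinite disjoint unions of I\G₂ and add one trivial orbit.) -/
open scoped Classical

namespace Stmt11Aux

variable {G₂ : Type u} [Group G₂] (H : Subgroup G₂)

/-- Action of `G₂` on `ℕ × G₂⧸H` (countably many copies of the coset space). -/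
def act1 : MulAction G₂ (ℕ × (G₂ ⧸ H)) where
  smul g p := (p.1, g • p.2)
  one_smul p := show (p.1, (1 : G₂) • p.2) = p by rw [one_smul]
  mul_smul g g' p := show (p.1, (g * g') • p.2) = (p.1, g • g' • p.2) by rw [mul_smul]

/-- Action of `G₂` on `(ℕ × G₂⧸H) ⊕ PUnit` (previous plus one fixed point). -/
def act2 : MulAction G₂ ((ℕ × (G₂ ⧸ H)) ⊕ PUnit.{u+1}) where
  smul g p := p.elim (fun q => .inl (q.1, g • q.2)) (fun u => .inr u)
  one_smul p := by
    rcases p with ⟨n, q⟩ | u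
    · show Sum.inl (n, (1 : G₂) • q) = _; rw [one_smul]
    · rfl
  mul_smul g g' p := by
    rcases p with ⟨n, q⟩ | u
    · show Sum.inl (n, (g * g') • q) = Sum.inl (n, g • g' • q); rw [mul_smul]
    · rfl

noncomputable def e :
    (ℕ × (G₂ ⧸ H)) ≃ ((ℕ × (G₂ ⧸ H)) ⊕ PUnit.{u+1}) where
  toFun p :=
    if p.2 = QuotientGroup.mk 1 then
      match p.1 with
      | 0 => .inr PUnit.unit
      | n + 1 => .inl (n, QuotientGroup.mk 1)
    else .inl p
  invFun s := s.elim
    (fun p => if p.2 = QuotientGroup.mk 1 then (p.1 + 1, p.2) else p)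
    (fun _ => (0, QuotientGroup.mk 1))
  left_inv p := by
    obtain ⟨n, q⟩ := p
    by_cases hq : q = QuotientGroup.mk 1
    · subst hq; cases n <;> simp
    · simp [hq]
  right_inv s := by
    rcases s with ⟨n, q⟩ | u
    · by_cases hq : q = QuotientGroup.mk 1
      · subst hq; simp
      · simp [hq]
    · simp

end Stmt11Aux

/-- If `h : G₁ →* G₂` is not surjective and its image has finite index, then
`h*` is not essentially injective: there are two non-isomorphic `G₂`-sets
whose pullbacks along `h` are isomorphic `G₁`-sets. -/
theorem stmt_11 {G₁ G₂ : Type u} [Group G₁] [Group G₂] (h : G₁ →* G₂)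
    (hne : h.range ≠ ⊤) (hfi : h.range.FiniteIndex) :
    ∃ (S₁ S₂ : Type u) (m₁ : MulAction G₂ S₁) (m₂ : MulAction G₂ S₂),
      (¬ ∃ e : S₁ ≃ S₂, ∀ (g : G₂) (s : S₁), e (m₁.smul g s) = m₂.smul g (e s)) ∧
      ∃ e : S₁ ≃ S₂, ∀ (g₁ : G₁) (s : S₁),
        e (m₁.smul (h g₁) s) = m₂.smul (h g₁) (e s) := by
  classical
  set H := h.range with hH
  obtain ⟨k, hk⟩ : ∃ k : G₂, k ∉ H := by
    by_contra hc
    push_neg at hc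
    exact hne ((Subgroup.eq_top_iff' H).mpr hc)
  refine ⟨ℕ × (G₂ ⧸ H), (ℕ × (G₂ ⧸ H)) ⊕ PUnit.{u+1},
    Stmt11Aux.act1 H, Stmt11Aux.act2 H, ?_, ?_⟩
  · rintro ⟨e, he⟩
    -- the preimage of the extra fixed point would be a global fixed point
    set x := e.symm (.inr PUnit.unit) with hx
    obtain ⟨n, q⟩ := x
    have hfix : ∀ g : G₂, g • q = q := by
      intro g
      have h1 : e ((Stmt11Aux.act1 H).smul g (n, q)) =
          (Stmt11Aux.act2 H).smul g (e (n, q)) := he g (n, q)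
      have h2 : e (n, q) = Sum.inr PUnit.unit := by rw [hx, Equiv.apply_symm_apply]
      rw [h2] at h1
      have h3 : (Stmt11Aux.act2 H).smul g (Sum.inr PUnit.unit) =
          (Sum.inr PUnit.unit : (ℕ × (G₂ ⧸ H)) ⊕ PUnit.{u+1}) := rfl
      rw [h3, ← h2] at h1
      have h4 : (Stmt11Aux.act1 H).smul g (n, q) = (n, q) := e.injective h1
      have h5 : ((n : ℕ), g • q) = (n, q) := h4
      exact (Prod.mk.injEq _ _ _ _).mp h5 |>.2
    -- but the coset space has no global fixed point
    obtain ⟨a, rfl⟩ := QuotientGroup.mk_surjective q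
    have := hfix (a * k * a⁻¹)
    rw [MulAction.Quotient.smul_mk, QuotientGroup.eq] at this
    apply hk
    simp only [smul_eq_mul] at this
    have h6 : (a * k * a⁻¹ * a)⁻¹ * a = k⁻¹ := by group
    rw [h6] at this
    exact (inv_mem_iff).mp this
  · refine ⟨Stmt11Aux.e H, ?_⟩
    intro g₁ s
    obtain ⟨n, q⟩ := s
    have hfixmem : ∀ g ∈ H, g • (QuotientGroup.mk 1 : G₂ ⧸ H) = QuotientGroup.mk 1 := by
      intro g hg
      rw [MulAction.Quotient.smul_mk, QuotientGroup.eq]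
      simpa using hg
    have hg : h g₁ ∈ H := ⟨g₁, rfl⟩
    have hfix1 := hfixmem (h g₁) hg
    have hsm : (Stmt11Aux.act1 H).smul (h g₁) (n, q) = (n, (h g₁) • q) := rfl
    rw [hsm]
    by_cases hq : q = QuotientGroup.mk 1
    · subst hq
      rw [hfix1]
      cases n with
      | zero =>
        have h0 : Stmt11Aux.e H (0, (QuotientGroup.mk 1 : G₂ ⧸ H)) =
            Sum.inr PUnit.unit := by simp [Stmt11Aux.e]
        rw [h0]; rfl
      | succ m =>
        have h0 : Stmt11Aux.e H (m + 1, (QuotientGroup.mk 1 : G₂ ⧸ H)) =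
            Sum.inl (m, QuotientGroup.mk 1) := by simp [Stmt11Aux.e]
        rw [h0]
        show _ = Sum.inl (m, (h g₁) • QuotientGroup.mk 1)
        rw [hfix1]
    · have hq' : (h g₁) • q ≠ QuotientGroup.mk 1 := by
        intro hc
        apply hq
        have h7 := congrArg (fun z => (h g₁)⁻¹ • z) hc
        simp only [smul_smul, inv_mul_cancel, one_smul] at h7
        rw [h7, hfixmem _ (inv_mem hg)]
      simp only [Stmt11Aux.e, Equiv.coe_fn_mk, if_neg hq, if_neg hq']
      rfl
end

section
/- A group homomorphism h : G₁ → G₂ is surjective if and only if the pullback functor h* from G₂-sets to G₁-sets is essentially injective (i.e., h*(S₁) ≅ h*(S₂) as G₁-sets implies S₁ ≅ S₂ as G₂-sets). -/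
universe u

open scoped Classical in
/-- The swindle equivalence `(C × ℕ) ⊕ pt ≃ C × ℕ` moving the extra point
to `(1, 0)` and shifting the fibre over the identity coset. -/
noncomputable def pbEquiv {G₂ : Type u} [Group G₂] (K : Subgroup G₂) :
    (((G₂ ⧸ K) × ℕ) ⊕ PUnit.{u + 1}) ≃ ((G₂ ⧸ K) × ℕ) where
  toFun x := match x with
    | .inl (c, n) => if c = QuotientGroup.mk 1 then (c, n + 1) else (c, n)
    | .inr _ => (QuotientGroup.mk 1, 0)
  invFun p :=
    if p.1 = QuotientGroup.mk 1 then
      match p.2 with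
      | 0 => .inr PUnit.unit
      | n + 1 => .inl (p.1, n)
    else .inl p
  left_inv x := by
    rcases x with ⟨c, n⟩ | u
    · by_cases hc : c = QuotientGroup.mk 1 <;> simp [hc]
    · simp
  right_inv p := by
    obtain ⟨c, n⟩ := p
    by_cases hc : c = QuotientGroup.mk 1
    · subst hc; cases n <;> simp
    · simp [hc]

open scoped Classical in
lemma pbEquiv_inl {G₂ : Type u} [Group G₂] (K : Subgroup G₂) (c : G₂ ⧸ K) (n : ℕ) :
    pbEquiv K (Sum.inl (c, n)) =
      if c = QuotientGroup.mk 1 then (c, n + 1) else (c, n) := rfl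

lemma pbEquiv_inr {G₂ : Type u} [Group G₂] (K : Subgroup G₂) (u : PUnit.{u + 1}) :
    pbEquiv K (Sum.inr u) = (QuotientGroup.mk 1, 0) := rfl

lemma smul_eq_one_iff_aux {G₂ : Type u} [Group G₂] {K : Subgroup G₂} {a : G₂}
    (ha : a ∈ K) (c : G₂ ⧸ K) :
    a • c = (QuotientGroup.mk 1 : G₂ ⧸ K) ↔ c = QuotientGroup.mk 1 := by
  induction c using QuotientGroup.induction_on with
  | H x =>
    rw [MulAction.Quotient.smul_mk, QuotientGroup.eq, QuotientGroup.eq]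
    simp only [smul_eq_mul, mul_inv_rev, mul_one]
    constructor
    · intro hx
      simpa [mul_assoc] using K.mul_mem hx ha
    · intro hx
      exact K.mul_mem hx (K.inv_mem ha)

/-- A homomorphism `h : G₁ →* G₂` is surjective iff the pullback functor `h*`
is essentially injective: `h*(S₁) ≅ h*(S₂)` as `G₁`-sets implies `S₁ ≅ S₂` as
`G₂`-sets. -/
theorem stmt_12 {G₁ G₂ : Type u} [Group G₁] [Group G₂] (h : G₁ →* G₂) :
    Function.Surjective h ↔
      ∀ (S₁ S₂ : Type u) (m₁ : MulAction G₂ S₁) (m₂ : MulAction G₂ S₂),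
        (∃ e : S₁ ≃ S₂, ∀ (g₁ : G₁) (s : S₁),
          e (m₁.smul (h g₁) s) = m₂.smul (h g₁) (e s)) →
        ∃ e : S₁ ≃ S₂, ∀ (g : G₂) (s : S₁), e (m₁.smul g s) = m₂.smul g (e s) := by
  constructor
  · rintro hs S₁ S₂ m₁ m₂ ⟨e, he⟩
    refine ⟨e, fun g s => ?_⟩
    obtain ⟨g₁, rfl⟩ := hs g
    exact he g₁ s
  · intro P
    set K := h.range with hK
    let m₁ : MulAction G₂ (((G₂ ⧸ K) × ℕ) ⊕ PUnit.{u + 1}) :=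
      { smul := fun g x => match x with
          | .inl (c, n) => .inl (g • c, n)
          | .inr u => .inr u
        one_smul := by rintro (⟨c, n⟩ | u)
                       · show Sum.inl ((1 : G₂) • c, _) = _
                         rw [one_smul]
                       · rfl
        mul_smul := by rintro a b (⟨c, n⟩ | u)
                       · show Sum.inl ((a * b) • c, n) = Sum.inl (a • b • c, n)
                         rw [mul_smul]
                       · rfl }
    let m₂ : MulAction G₂ ((G₂ ⧸ K) × ℕ) :=
      { smul := fun g p => (g • p.1, p.2)
        one_smul := by rintro ⟨c, n⟩
                       show ((1 : G₂) • c, n) = (c, n)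
                       rw [one_smul]
        mul_smul := by rintro a b ⟨c, n⟩
                       show ((a * b) • c, n) = (a • b • c, n)
                       rw [mul_smul] }
    have key : ∃ e : (((G₂ ⧸ K) × ℕ) ⊕ PUnit.{u + 1}) ≃ ((G₂ ⧸ K) × ℕ),
        ∀ (g : G₂) (s : ((G₂ ⧸ K) × ℕ) ⊕ PUnit.{u + 1}),
          e (m₁.smul g s) = m₂.smul g (e s) := by
      refine P _ _ m₁ m₂ ⟨pbEquiv K, ?_⟩
      intro g₁ s
      have hmem : h g₁ ∈ K := ⟨g₁, rfl⟩
      have l2 : ∀ (g : G₂) (p : (G₂ ⧸ K) × ℕ), m₂.smul g p = (g • p.1, p.2) :=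
        fun _ _ => rfl
      rcases s with ⟨c, n⟩ | u
      · have l1 : m₁.smul (h g₁) (Sum.inl (c, n)) = Sum.inl (h g₁ • c, n) := rfl
        by_cases hc : c = QuotientGroup.mk 1
        · rw [l1, pbEquiv_inl, pbEquiv_inl, if_pos hc,
            if_pos ((smul_eq_one_iff_aux hmem c).mpr hc), l2]
        · rw [l1, pbEquiv_inl, pbEquiv_inl, if_neg hc,
            if_neg (fun hx => hc ((smul_eq_one_iff_aux hmem c).mp hx)), l2]
      · have l1 : m₁.smul (h g₁) (Sum.inr u) = Sum.inr u := rfl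
        rw [l1, pbEquiv_inr, l2, (smul_eq_one_iff_aux hmem _).mpr rfl]
    obtain ⟨E, hE⟩ := key
    set p := E (Sum.inr PUnit.unit) with hp
    have hfix : ∀ g : G₂, g • p.1 = p.1 := by
      intro g
      have := hE g (Sum.inr PUnit.unit)
      have h2 : m₂.smul g p = p := this.symm
      have : (g • p.1, p.2) = p := h2
      exact congrArg Prod.fst this
    obtain ⟨y, hy⟩ : ∃ y : G₂, QuotientGroup.mk y = p.1 :=
      Quotient.exists_rep p.1
    intro g₂
    have := hfix (y * g₂ * y⁻¹)
    rw [← hy, MulAction.Quotient.smul_mk] at this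
    have hmem : ((y * g₂ * y⁻¹) • y)⁻¹ * y ∈ K := (QuotientGroup.eq).mp this
    have hg : g₂⁻¹ ∈ K := by
      simpa [smul_eq_mul, mul_assoc, mul_inv_rev] using hmem
    obtain ⟨g₁, hg₁⟩ := K.inv_mem hg
    exact ⟨g₁, by simpa using hg₁⟩
end

section
/- Let H ≤ G be groups with inclusion ι. Then the pullback functor ι* (restriction of group actions) is essentially surjective from G-sets onto H-sets if and only if for every subgroup K ≤ H there exists a subgroup L ≤ G with G = L·H (every element of G is a product of an element of L and an element of H) and L ∩ H = K. -/
private lemma quot_heq_of {G : Type u} [Group G] {Ω : Type v} (L : Ω → Subgroup G)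
    {a b : Ω} (h : a = b) {g g' : G} (hgg : g⁻¹ * g' ∈ L b) :
    HEq (QuotientGroup.mk g : G ⧸ L a) (QuotientGroup.mk g' : G ⧸ L b) := by
  subst h; exact heq_of_eq (QuotientGroup.eq.mpr hgg)

private lemma mem_of_quot_heq {G : Type u} [Group G] {Ω : Type v} (L : Ω → Subgroup G)
    {a b : Ω} (h : a = b) {g g' : G}
    (hh : HEq (QuotientGroup.mk g : G ⧸ L a) (QuotientGroup.mk g' : G ⧸ L b)) :
    g⁻¹ * g' ∈ L b := by
  subst h; exact QuotientGroup.eq.mp (eq_of_heq hh)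

open Pointwise in
/-- For a subgroup `H ≤ G`, restriction of actions from `G`-sets to `H`-sets is
essentially surjective iff for every subgroup `K ≤ H` there is a subgroup
`L ≤ G` with `G = L·H` and `L ∩ H = K`. -/
theorem stmt_16 {G : Type u} [Group G] (H : Subgroup G) :
    (∀ (S : Type u) (mS : MulAction H S),
        ∃ (T : Type u) (mT : MulAction G T) (e : S ≃ T),
          ∀ (x : H) (s : S), e (mS.smul x s) = mT.smul (x : G) (e s)) ↔
      ∀ K : Subgroup H, ∃ L : Subgroup G,
        (L : Set G) * (H : Set G) = Set.univ ∧ L ⊓ H = K.map H.subtype := by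
  classical
  constructor
  · -- forward direction
    intro hes K
    obtain ⟨T, mT, e, he⟩ := hes (H ⧸ K) inferInstance
    letI := mT
    have he' : ∀ (x : H) (s : H ⧸ K), e (x • s) = (x : G) • e s := he
    set t : T := e (QuotientGroup.mk (1 : H)) with ht
    have hsmul : ∀ h : H, e (QuotientGroup.mk h) = (h : G) • t := by
      intro h
      have h1 : (h • (QuotientGroup.mk (1 : H) : H ⧸ K)) = QuotientGroup.mk h := by
        rw [MulAction.Quotient.smul_mk, smul_eq_mul, mul_one]
      rw [← h1, he']
    refine ⟨MulAction.stabilizer G t, ?_, ?_⟩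
    · ext g
      simp only [Set.mem_univ, iff_true]
      obtain ⟨s, hs⟩ := e.surjective (g⁻¹ • t)
      obtain ⟨h, rfl⟩ := QuotientGroup.mk_surjective s
      have h2 : (h : G) • t = g⁻¹ • t := by rw [← hsmul, hs]
      have h3 : g * (h : G) ∈ MulAction.stabilizer G t := by
        have : (g * (h : G)) • t = t := by
          rw [mul_smul, h2, smul_smul, mul_inv_cancel, one_smul]
        exact this
      have h4 : ((h : G))⁻¹ ∈ (H : Set G) := inv_mem h.2
      have := Set.mul_mem_mul h3 h4
      simpa using this
    · ext g
      constructor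
      · rintro ⟨hgL, hgH⟩
        have h1 : ((⟨g, hgH⟩ : H) : G) • t = t := hgL
        rw [← hsmul, ht] at h1
        have h2 : (QuotientGroup.mk (⟨g, hgH⟩ : H) : H ⧸ K) = QuotientGroup.mk 1 :=
          e.injective h1
        have h3 : (⟨g, hgH⟩ : H) ∈ K := by
          have := QuotientGroup.eq.mp h2.symm
          simpa using this
        exact ⟨⟨g, hgH⟩, h3, rfl⟩
      · rintro ⟨k, hk, rfl⟩
        refine ⟨?_, k.2⟩
        show ((k : H) : G) • t = t
        rw [← hsmul, ht]
        congr 1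
        exact QuotientGroup.eq.mpr (by simpa using inv_mem hk)
  · -- backward direction
    intro hyp S mS
    letI := mS
    set Ω := MulAction.orbitRel.Quotient H S with hΩ
    set cls : S → Ω := fun s => Quotient.mk (MulAction.orbitRel H S) s with hcls
    set rep : Ω → S := fun ω => Quotient.out ω with hrep
    set K : Ω → Subgroup H := fun ω => MulAction.stabilizer H (rep ω) with hK
    choose L hL1 hL2 using fun ω => hyp (K ω)
    have hKL : ∀ (ω : Ω) (k : H), k ∈ K ω → (k : G) ∈ L ω := by
      intro ω k hk
      have : (k : G) ∈ L ω ⊓ H := by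
        rw [hL2 ω]; exact ⟨k, hk, rfl⟩
      exact this.1
    have key : ∀ s : S, ∃ h : H, h • rep (cls s) = s := by
      intro s
      have h1 : cls (rep (cls s)) = cls s := Quotient.out_eq _
      have h2 : rep (cls s) ∈ MulAction.orbit H s := Quotient.exact h1
      obtain ⟨x, hx⟩ := MulAction.mem_orbit_iff.mp h2
      exact ⟨x⁻¹, by rw [← hx, inv_smul_smul]⟩
    choose ch hch using key
    have repeq : ∀ {s s' : S}, cls s = cls s' → rep (cls s) = rep (cls s') :=
      fun h => congrArg rep h
    let f : S → (Σ ω : Ω, G ⧸ L ω) := fun s => ⟨cls s, QuotientGroup.mk (ch s : G)⟩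
    have hequiv : ∀ (x : H) (s : S), f (x • s) = (x : G) • f s := by
      intro x s
      have hω : cls (x • s) = cls s := Quotient.sound (MulAction.mem_orbit s x)
      have hmem : ((ch (x • s) : G))⁻¹ * ((x : G) * (ch s : G)) ∈ L (cls s) := by
        have h1 : (ch (x • s))⁻¹ * (x * ch s) ∈ K (cls s) := by
          have e1 : ch (x • s) • rep (cls s) = x • s := by
            rw [← repeq hω]; exact hch (x • s)
          have e2 : (x * ch s) • rep (cls s) = x • s := by
            rw [mul_smul, hch s]
          show ((ch (x • s))⁻¹ * (x * ch s)) • rep (cls s) = rep (cls s)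
          rw [mul_smul, inv_smul_eq_iff]
          exact e2.trans e1.symm
        have := hKL _ _ h1
        simpa [mul_assoc] using this
      show (⟨cls (x • s), QuotientGroup.mk (ch (x • s) : G)⟩ : Σ ω : Ω, G ⧸ L ω)
          = (x : G) • ⟨cls s, QuotientGroup.mk (ch s : G)⟩
      rw [Sigma.smul_mk, MulAction.Quotient.smul_mk]
      exact Sigma.ext hω (quot_heq_of L hω hmem)
    have hinj : Function.Injective f := by
      intro s s' hss
      have h1 : cls s = cls s' := congrArg Sigma.fst hss
      have h2 : HEq (QuotientGroup.mk (ch s : G) : G ⧸ L (cls s))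
          (QuotientGroup.mk (ch s' : G) : G ⧸ L (cls s')) := by
        have := Sigma.mk.inj_iff.mp hss
        exact this.2
      have h3 : ((ch s : G))⁻¹ * (ch s' : G) ∈ L (cls s') := mem_of_quot_heq L h1 h2
      have h4 : ((ch s : G))⁻¹ * (ch s' : G) ∈ L (cls s') ⊓ H :=
        ⟨h3, H.mul_mem (H.inv_mem (ch s).2) (ch s').2⟩
      rw [hL2] at h4
      obtain ⟨k, hk, hk2⟩ := h4
      have h5 : (ch s)⁻¹ * ch s' = k := by
        apply Subtype.ext
        push_cast
        rw [← hk2]; rfl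
      have h6 : ch s' = ch s * k := by rw [← h5, mul_inv_cancel_left]
      calc s = ch s • rep (cls s) := (hch s).symm
        _ = ch s • rep (cls s') := by rw [repeq h1]
        _ = ch s • (k • rep (cls s')) := by rw [hk]
        _ = (ch s * k) • rep (cls s') := by rw [mul_smul]
        _ = ch s' • rep (cls s') := by rw [← h6]
        _ = s' := hch s'
    have hsurj : Function.Surjective f := by
      rintro ⟨ω, q⟩
      obtain ⟨g, rfl⟩ := QuotientGroup.mk_surjective q
      have hg : g⁻¹ ∈ (L ω : Set G) * (H : Set G) := by rw [hL1]; trivial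
      obtain ⟨l, hl, x, hx, hlx⟩ := hg
      set hH : H := ⟨x, hx⟩ with hhH
      refine ⟨hH⁻¹ • rep ω, ?_⟩
      have hωs : cls (hH⁻¹ • rep ω) = ω := by
        have : cls (hH⁻¹ • rep ω) = cls (rep ω) :=
          Quotient.sound (MulAction.mem_orbit (rep ω) hH⁻¹)
        rw [this]; exact Quotient.out_eq ω
      have hKmem : hH * ch (hH⁻¹ • rep ω) ∈ K ω := by
        have e1 : ch (hH⁻¹ • rep ω) • rep ω = hH⁻¹ • rep ω := by
          have h0 := hch (hH⁻¹ • rep ω)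
          rwa [congrArg rep hωs] at h0
        show (hH * ch (hH⁻¹ • rep ω)) • rep ω = rep ω
        rw [mul_smul, e1, smul_inv_smul]
      have hLmem : x * (ch (hH⁻¹ • rep ω) : G) ∈ L ω := hKL _ _ hKmem
      have hmem : ((ch (hH⁻¹ • rep ω) : G))⁻¹ * g ∈ L ω := by
        have hlx' : l * x = g⁻¹ := hlx
        have hg' : g = x⁻¹ * l⁻¹ := by
          rw [← inv_inv g, ← hlx']; group
        rw [hg']
        have : ((ch (hH⁻¹ • rep ω) : G))⁻¹ * (x⁻¹ * l⁻¹)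
            = (x * (ch (hH⁻¹ • rep ω) : G))⁻¹ * l⁻¹ := by group
        rw [this]
        exact mul_mem (inv_mem hLmem) (inv_mem hl)
      show (⟨cls (hH⁻¹ • rep ω), QuotientGroup.mk (ch (hH⁻¹ • rep ω) : G)⟩ : Σ ω : Ω, G ⧸ L ω)
          = ⟨ω, QuotientGroup.mk g⟩
      exact Sigma.ext hωs (quot_heq_of L hωs hmem)
    exact ⟨Σ ω : Ω, G ⧸ L ω, inferInstance, Equiv.ofBijective f ⟨hinj, hsurj⟩,
      fun x s => hequiv x s⟩
end

section
/- Let H ≤ G and K ≤ H. If there exists L ≤ G with G = L·H and L ∩ H = K, then the restriction to H of the transitive G-set L\G is isomorphic as an H-set to K\H. -/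
open Pointwise in
/-- If `H, L ≤ G`, `K ≤ H` satisfies `K = L ∩ H`, and `G = L·H`, then the
restriction to `H` of the transitive `G`-set `G ⧸ L` is isomorphic as an
`H`-set to `H ⧸ K`. -/
theorem stmt_17 {G : Type*} [Group G] (H L : Subgroup G) (K : Subgroup H)
    (hK : K.map H.subtype = L ⊓ H)
    (hLH : (L : Set G) * (H : Set G) = Set.univ) :
    ∃ e : (G ⧸ L) ≃ (H ⧸ K),
      ∀ (x : H) (y : G ⧸ L), e ((x : G) • y) = x • e y := by
  -- map φ : H ⧸ K → G ⧸ L, hK ↦ hL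
  have hKL : ∀ k : H, k ∈ K → (k : G) ∈ L := by
    intro k hk
    have : (k : G) ∈ L ⊓ H := hK ▸ ⟨k, hk, rfl⟩
    exact this.1
  let φ : H ⧸ K → G ⧸ L := Quotient.map' (fun h : H => (h : G)) (by
    intro a b hab
    rw [QuotientGroup.leftRel_apply] at hab ⊢
    simpa using hKL _ hab)
  have hφ : ∀ h : H, φ (QuotientGroup.mk h) = QuotientGroup.mk (h : G) := fun _ => rfl
  have hinj : Function.Injective φ := by
    intro a b
    induction a using QuotientGroup.induction_on
    induction b using QuotientGroup.induction_on
    rename_i a b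
    rw [hφ, hφ]
    intro hab
    rw [QuotientGroup.eq] at hab ⊢
    have : ((a⁻¹ * b : H) : G) ∈ L ⊓ H := ⟨by simpa using hab, (a⁻¹ * b).2⟩
    rw [← hK] at this
    obtain ⟨k, hk, hkeq⟩ := this
    have : k = a⁻¹ * b := Subtype.ext hkeq
    exact this ▸ hk
  have hsurj : Function.Surjective φ := by
    intro y
    induction y using QuotientGroup.induction_on
    rename_i g
    -- g⁻¹ ∈ univ = L * H, so g⁻¹ = l * h, g = h⁻¹ * l⁻¹
    have : g⁻¹ ∈ (L : Set G) * (H : Set G) := hLH ▸ Set.mem_univ _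
    obtain ⟨l, hl, h, hh, hlh⟩ := this
    refine ⟨QuotientGroup.mk ⟨h⁻¹, H.inv_mem hh⟩, ?_⟩
    rw [hφ, QuotientGroup.eq]
    show (h⁻¹)⁻¹ * g ∈ L
    have : g = h⁻¹ * l⁻¹ := by
      have := congrArg (·⁻¹) hlh
      simp at this
      rw [← this]
    rw [this]
    simpa using L.inv_mem hl
  have equi : ∀ (x : H) (z : H ⧸ K), φ (x • z) = (x : G) • φ z := by
    intro x z
    induction z using QuotientGroup.induction_on
    rename_i h
    rfl
  refine ⟨(Equiv.ofBijective φ ⟨hinj, hsurj⟩).symm, fun x y => ?_⟩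
  apply hinj
  have hr : ∀ z : G ⧸ L, φ ((Equiv.ofBijective φ ⟨hinj, hsurj⟩).symm z) = z := fun z =>
    (Equiv.ofBijective φ ⟨hinj, hsurj⟩).apply_symm_apply z
  rw [hr, equi, hr]
end

section
/- Let G = A ⋊ B be an external semidirect product in which the action of B on A preserves every subgroup of A setwise, and let H := A × {e} ⊴ G. Then for every subgroup K ≤ H there exists a subgroup L ≤ G with G = L·H and L ∩ H = K; consequently (G, H) is an essentially surjective pair (restriction from G-sets to H-sets is essentially surjective). -/
universe u

private lemma stmt_18_phi_mem {A B : Type u} [Group A] [Group B] {φ : B →* MulAut A}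
    (hφ : ∀ (C : Subgroup A) (b : B), C.map (φ b).toMonoidHom = C)
    {C : Subgroup A} (b : B) {c : A} (hc : c ∈ C) : φ b c ∈ C := by
  have := Subgroup.mem_map_of_mem (φ b).toMonoidHom hc
  rwa [hφ] at this

/-- The action of `G = A ⋊[φ] B` on `A ⧸ C` given by `(a, b) • xC = a • φ b x • C`,
well-defined because `φ b` preserves `C`. -/
def stmt_18_qAct {A B : Type u} [Group A] [Group B] (φ : B →* MulAut A)
    (hφ : ∀ (C : Subgroup A) (b : B), C.map (φ b).toMonoidHom = C)
    (C : Subgroup A) : MulAction (A ⋊[φ] B) (A ⧸ C) where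
  smul g := Quotient.map' (fun x => g.left * φ g.right x) (by
    intro x y h
    rw [QuotientGroup.leftRel_apply] at h ⊢
    have h2 : (g.left * φ g.right x)⁻¹ * (g.left * φ g.right y)
        = φ g.right (x⁻¹ * y) := by
      rw [map_mul, map_inv]; group
    rw [h2]; exact stmt_18_phi_mem hφ _ h)
  one_smul := by
    intro x
    induction x using Quotient.inductionOn' with
    | h x =>
      show Quotient.mk'' _ = Quotient.mk'' x
      simp
  mul_smul := by
    intro g h x
    induction x using Quotient.inductionOn' with
    | h x =>
      show Quotient.mk'' _ = Quotient.mk'' _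
      simp [MulAut.mul_apply, map_mul, mul_assoc]

/-- Fibrewise action of a group on a sigma type. -/
def stmt_18_sigAct {G : Type u} [Group G] {ι : Type u} (T : ι → Type u)
    (m : ∀ i, MulAction G (T i)) : MulAction G (Σ i, T i) where
  smul g x := ⟨x.1, (m x.1).smul g x.2⟩
  one_smul := by
    rintro ⟨i, t⟩
    exact congrArg (Sigma.mk i) ((m i).one_smul t)
  mul_smul := by
    rintro g h ⟨i, t⟩
    exact congrArg (Sigma.mk i) ((m i).mul_smul g h t)

open Pointwise in
/-- Let `G = A ⋊[φ] B` be a semidirect product in which the action of `B`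
preserves every subgroup of `A` setwise, and let `H` be the canonical copy of
`A` in `G`. Then every subgroup `K ≤ H` admits a subgroup `L ≤ G` with
`G = L·H` and `L ∩ H = K`; consequently restriction from `G`-sets to `H`-sets
is essentially surjective. -/
theorem stmt_18 {A B : Type u} [Group A] [Group B] (φ : B →* MulAut A)
    (hφ : ∀ (C : Subgroup A) (b : B), C.map (φ b).toMonoidHom = C) :
    (∀ K : Subgroup (A ⋊[φ] B),
        K ≤ (SemidirectProduct.inl : A →* A ⋊[φ] B).range →
        ∃ L : Subgroup (A ⋊[φ] B),
          (L : Set (A ⋊[φ] B)) *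
              ((SemidirectProduct.inl : A →* A ⋊[φ] B).range : Set (A ⋊[φ] B)) =
            Set.univ ∧
          L ⊓ (SemidirectProduct.inl : A →* A ⋊[φ] B).range = K) ∧
      ∀ (S : Type u)
        (mS : MulAction (SemidirectProduct.inl : A →* A ⋊[φ] B).range S),
        ∃ (T : Type u) (mT : MulAction (A ⋊[φ] B) T) (e : S ≃ T),
          ∀ (x : (SemidirectProduct.inl : A →* A ⋊[φ] B).range) (s : S),
            e (mS.smul x s) = mT.smul (x : A ⋊[φ] B) (e s) := by
  constructor
  · -- Part 1: the subgroup `L = C ⋊ B`.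
    intro K hK
    set C : Subgroup A := K.comap (SemidirectProduct.inl : A →* A ⋊[φ] B) with hC
    have phimem : ∀ (b : B) {c : A}, c ∈ C → φ b c ∈ C := fun b _ hc =>
      stmt_18_phi_mem hφ b hc
    refine ⟨{ carrier := {g | g.left ∈ C}
              one_mem' := C.one_mem
              mul_mem' := by
                intro g h hg hh
                simp only [Set.mem_setOf_eq, SemidirectProduct.mul_left] at *
                exact C.mul_mem hg (phimem _ hh)
              inv_mem' := by
                intro g hg
                simp only [Set.mem_setOf_eq, SemidirectProduct.inv_left] at *
                exact phimem _ (C.inv_mem hg) }, ?_, ?_⟩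
    · ext g
      simp only [Set.mem_univ, iff_true]
      refine Set.mem_mul.mpr ⟨SemidirectProduct.inr g.right, ?_,
        SemidirectProduct.inl ((φ g.right)⁻¹ g.left), ⟨_, rfl⟩, ?_⟩
      · show (SemidirectProduct.inr g.right : A ⋊[φ] B).left ∈ C
        simpa using C.one_mem
      · ext <;> simp
    · ext g
      simp only [Subgroup.mem_inf, MonoidHom.mem_range, Subgroup.mem_mk,
        Set.mem_setOf_eq, Subgroup.mem_comap]
      constructor
      · rintro ⟨hgC, a, ha⟩
        have hr : g.right = 1 := by rw [← ha]; simp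
        have : SemidirectProduct.inl g.left * SemidirectProduct.inr g.right = g :=
          SemidirectProduct.inl_left_mul_inr_right g
        rw [hr, map_one, mul_one] at this
        rw [← this]; exact hgC
      · intro hg
        obtain ⟨a, ha⟩ := hK hg
        have hl : g.left = a := by rw [← ha]; simp
        refine ⟨?_, a, ha⟩
        show SemidirectProduct.inl g.left ∈ K
        rw [hl, ha]; exact hg
  · -- Part 2: essential surjectivity of restriction.
    intro S mS
    letI mA : MulAction A S :=
      { smul := fun a s => mS.smul ⟨SemidirectProduct.inl a, ⟨a, rfl⟩⟩ s
        one_smul := fun s => by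
          have h1 : (⟨SemidirectProduct.inl (1 : A), ⟨1, rfl⟩⟩ :
              (SemidirectProduct.inl : A →* A ⋊[φ] B).range) = 1 :=
            Subtype.ext (map_one _)
          show mS.smul _ s = s
          rw [h1]; exact mS.one_smul s
        mul_smul := fun a b s => by
          have h1 : (⟨SemidirectProduct.inl (a * b), ⟨a * b, rfl⟩⟩ :
              (SemidirectProduct.inl : A →* A ⋊[φ] B).range)
              = ⟨SemidirectProduct.inl a, ⟨a, rfl⟩⟩ * ⟨SemidirectProduct.inl b, ⟨b, rfl⟩⟩ :=
            Subtype.ext (map_mul _ _ _)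
          show mS.smul _ s = mS.smul _ (mS.smul _ s)
          rw [h1]; exact mS.mul_smul _ _ s }
    set Ω := MulAction.orbitRel.Quotient A S with hΩ
    set St : Ω → Subgroup A := fun ω => MulAction.stabilizer A (Quotient.out ω) with hSt
    set T := Σ ω : Ω, A ⧸ St ω with hT
    set mT : MulAction (A ⋊[φ] B) T := stmt_18_sigAct _ (fun ω => stmt_18_qAct φ hφ (St ω))
      with hmT
    set f : T → S := fun t => Quotient.liftOn' t.2 (fun g => g • (Quotient.out t.1 : S))
      (by
        rintro g h hr
        have hst : (g⁻¹ * h) • (Quotient.out t.1 : S) = Quotient.out t.1 :=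
          QuotientGroup.leftRel_apply.mp hr
        calc g • (Quotient.out t.1 : S) = g • ((g⁻¹ * h) • (Quotient.out t.1 : S)) := by
              rw [hst]
          _ = h • (Quotient.out t.1 : S) := by rw [← mul_smul]; group
        ) with hf
    have hbij : Function.Bijective f := by
      constructor
      · rintro ⟨ω1, x1⟩ ⟨ω2, x2⟩ h
        induction x1 using Quotient.inductionOn' with
        | h g1 =>
          induction x2 using Quotient.inductionOn' with
          | h g2 =>
            have hfe : g1 • (Quotient.out ω1 : S) = g2 • (Quotient.out ω2 : S) := h
            have hω : ω1 = ω2 := by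
              have h1 : Quotient.mk'' (Quotient.out ω1 : S) = ω1 := Quotient.out_eq' ω1
              have h2 : Quotient.mk'' (Quotient.out ω2 : S) = ω2 := Quotient.out_eq' ω2
              rw [← h1, ← h2]
              apply Quotient.sound'
              rw [MulAction.orbitRel_apply]
              refine ⟨g1⁻¹ * g2, ?_⟩
              show (g1⁻¹ * g2) • (Quotient.out ω2 : S) = Quotient.out ω1
              rw [mul_smul, ← hfe, inv_smul_smul]
            subst hω
            have hst : g1⁻¹ * g2 ∈ St ω1 := by
              rw [hSt, MulAction.mem_stabilizer_iff, mul_smul, ← hfe, inv_smul_smul]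
            exact congrArg (Sigma.mk ω1)
              (Quotient.sound' (QuotientGroup.leftRel_apply.mpr hst))
      · intro s
        have hr : (Quotient.out (Quotient.mk'' s : Ω) : S) ∈ MulAction.orbit A s := by
          rw [← MulAction.orbitRel_apply]
          exact Quotient.exact' (Quotient.out_eq' _)
        obtain ⟨g, hg⟩ := hr
        exact ⟨⟨Quotient.mk'' s, QuotientGroup.mk g⁻¹⟩, by
          show g⁻¹ • (Quotient.out (Quotient.mk'' s : Ω) : S) = s
          rw [← hg, inv_smul_smul]⟩
    have key : ∀ (a : A) (t : T),
        f (mT.smul (SemidirectProduct.inl a) t) = a • f t := by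
      rintro a ⟨ω, x⟩
      induction x using Quotient.inductionOn' with
      | h g =>
        show ((SemidirectProduct.inl a : A ⋊[φ] B).left *
            φ (SemidirectProduct.inl a : A ⋊[φ] B).right g) • (Quotient.out ω : S)
          = a • (g • (Quotient.out ω : S))
        simp [mul_smul]
    set e : S ≃ T := (Equiv.ofBijective f hbij).symm with he
    refine ⟨T, mT, e, ?_⟩
    intro x s
    obtain ⟨a, ha⟩ := x.2
    have hx : x = ⟨SemidirectProduct.inl a, ⟨a, rfl⟩⟩ := Subtype.ext ha.symm
    have h1 : mS.smul x s = a • s := by rw [hx]; rfl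
    have h2 : f (mT.smul (x : A ⋊[φ] B) (e s)) = a • s := by
      rw [hx]
      show f (mT.smul (SemidirectProduct.inl a) (e s)) = a • s
      rw [key a (e s)]
      congr 1
      exact (Equiv.ofBijective f hbij).apply_symm_apply s
    rw [h1, ← h2]
    exact (Equiv.ofBijective f hbij).symm_apply_apply _
end
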